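/- Let k > 0 and let x : (0,∞) → (0,∞) be a differentiable function of λ such that for every λ > 0 the master equation √(λ·x(λ)) · I'_{(k−2)/2}(√(λ·x(λ))) = (x(λ) − (k−2)/2) · I_{(k−2)/2}(√(λ·x(λ))) holds, where I'_ν denotes the derivative of I_ν. Assume moreover that for every λ > 0 one has I_{(k−2)/2}(√(λ·x(λ))) ≠ 0 and x(λ) + λ·x'(λ) ≠ 0. Then x satisfies the ordinary differential equation λ·x'(λ)·(x(λ) − k − λ + 4) + x(λ)·(x(λ) − k − λ + 2) = 0 for every λ > 0. -/

import Mathlib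

/-!
For `x > 0` one has `I_ν(x) = (x/2)^ν h(x²/4)` with `h(t) = ∑ tᵐ / (m! Γ(m+ν+1))` an entire power
series. Differentiating termwise, `Γ(s+1) = s Γ(s)` gives `t h'' + (ν+1) h' = h`, which is Bessel's
equation in the form `x (x I_ν')' = (x² + ν²) I_ν`.

Differentiate the master equation `s I_ν'(s) = (x - ν) I_ν(s)` along `s = √(λ x)`. Bessel's equation
removes `I_ν''`, the master equation itself removes `I_ν'`, and cancelling `I_ν(s) ≠ 0` leaves
`(s² + ν²) s' = s x' + (x - ν)² s'`. Since `2 s s' = x + λ x'`, `s² = λ x` and `ν = (k-2)/2`, this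
is `x` times the claimed equation.
-/

open Real

/-- Modified Bessel function of the first kind, defined by its power series. -/
noncomputable def besselI (ν : ℝ) (x : ℝ) : ℝ :=
  ∑' m : ℕ, (x / 2) ^ (2 * (m : ℝ) + ν) / ((Nat.factorial m : ℝ) * Real.Gamma ((m : ℝ) + ν + 1))

open Filter Topology

section PowerSeries

variable {a : ℕ → ℝ}

noncomputable def powerSeriesSum (a : ℕ → ℝ) (t : ℝ) : ℝ := ∑' m, a m * t ^ m

def derivCoeff (a : ℕ → ℝ) (m : ℕ) : ℝ := (m + 1) * a (m + 1)

theorem summable_derivCoeff_mul_pow (ha : ∀ r, Summable fun m => a m * r ^ m) (r : ℝ) :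
    Summable fun m => derivCoeff a m * r ^ m := by
  set ρ := |r| + 1
  set q := |r| / ρ
  have hρ : 0 < ρ := by positivity
  have hq : ‖q‖ < 1 := by
    rw [Real.norm_of_nonneg (by positivity), div_lt_one hρ]
    linarith
  have hg : Summable fun m : ℕ => ((m : ℝ) ^ 1 * q ^ m + q ^ m) / ρ :=
    ((summable_pow_mul_geometric_of_norm_lt_one 1 hq).add
      (summable_geometric_of_norm_lt_one hq)).div_const ρ
  have hbdd : ∀ᶠ m in atTop, |a (m + 1)| * ρ ^ (m + 1) ≤ 1 := by
    filter_upwards [((tendsto_add_atTop_iff_nat 1).2 (ha ρ).tendsto_atTop_zero).norm.eventually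
      (ge_mem_nhds (by norm_num : ‖(0 : ℝ)‖ < 1))] with m hm
    rwa [norm_mul, norm_pow, Real.norm_of_nonneg hρ.le] at hm
  -- `a m ρ ^ m → 0`, so the terms are dominated by `(m + 1) (|r| / ρ) ^ m / ρ`
  refine hg.of_norm_bounded_eventually_nat ?_
  filter_upwards [hbdd] with m hm
  have hr : |r| ^ m = q ^ m * ρ ^ (m + 1) / ρ := by
    rw [div_pow, pow_succ]; field_simp
  calc ‖derivCoeff a m * r ^ m‖ = (m + 1) * (|a (m + 1)| * ρ ^ (m + 1)) * q ^ m / ρ := by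
        rw [derivCoeff, Real.norm_eq_abs, abs_mul, abs_mul, abs_pow, hr]
        rw [abs_of_nonneg (by positivity : (0 : ℝ) ≤ m + 1)]
        ring
    _ ≤ (m + 1) * 1 * q ^ m / ρ := by gcongr
    _ = ((m : ℝ) ^ 1 * q ^ m + q ^ m) / ρ := by ring

theorem hasDerivAt_powerSeriesSum (ha : ∀ r, Summable fun m => a m * r ^ m) (t : ℝ) :
    HasDerivAt (powerSeriesSum a) (powerSeriesSum (derivCoeff a) t) t := by
  set R := |t| + 1
  have ht : t ∈ Set.Ioo (-R) R := abs_lt.1 (by simp [R])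
  have hu : Summable fun m => |a m| * (m * R ^ (m - 1)) := by
    refine (summable_nat_add_iff 1).1 ((summable_derivCoeff_mul_pow ha R).abs.congr fun m => ?_)
    rw [derivCoeff, abs_mul, abs_mul, abs_pow, abs_of_pos (by positivity : (0 : ℝ) < m + 1),
      abs_of_pos (by positivity : 0 < R)]
    push_cast
    ring
  have hsum : ∑' m, a m * (m * t ^ (m - 1)) = ∑' m, derivCoeff a m * t ^ m := by
    rw [tsum_eq_zero_add' ((summable_derivCoeff_mul_pow ha t).congr fun m => ?_)]
    · simp [derivCoeff, mul_comm, mul_left_comm]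
    · simp only [derivCoeff, Nat.cast_add, Nat.cast_one, add_tsub_cancel_right]; ring
  rw [powerSeriesSum, ← hsum]
  refine hasDerivAt_tsum_of_isPreconnected hu isOpen_Ioo isPreconnected_Ioo
    (fun m y _ => (hasDerivAt_pow m y).const_mul (a m)) (fun m y hy => ?_) ht (ha t) ht
  have hy : |y| ≤ R := (abs_lt.2 hy).le
  rw [norm_mul, norm_mul, Real.norm_eq_abs, Real.norm_natCast, norm_pow, Real.norm_eq_abs]
  gcongr

theorem tsum_natCast_mul_mul_pow (ha : ∀ r, Summable fun m => a m * r ^ m) (t : ℝ) :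
    ∑' m : ℕ, (m : ℝ) * a m * t ^ m = t * powerSeriesSum (derivCoeff a) t := by
  rw [powerSeriesSum, ← tsum_mul_left,
    tsum_eq_zero_add' (((summable_derivCoeff_mul_pow ha t).mul_left t).congr fun m => ?_)]
  · simp only [Nat.cast_zero, zero_mul, zero_add, derivCoeff]
    exact tsum_congr fun m => by push_cast; ring
  · simp only [derivCoeff, Nat.cast_add, Nat.cast_one]; ring

end PowerSeries

section BesselCoeff

variable {ν : ℝ}

noncomputable def besselCoeff (ν : ℝ) (m : ℕ) : ℝ :=
  ((Nat.factorial m : ℝ) * Gamma ((m : ℝ) + ν + 1))⁻¹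

theorem besselCoeff_pos (hν : -1 < ν) (m : ℕ) : 0 < besselCoeff ν m := by
  have : 0 < Gamma ((m : ℝ) + ν + 1) := Gamma_pos_of_pos (by linarith [m.cast_nonneg (α := ℝ)])
  unfold besselCoeff
  positivity

theorem besselCoeff_eq_mul_succ (hν : -1 < ν) (m : ℕ) :
    besselCoeff ν m = (m + 1) * (m + ν + 1) * besselCoeff ν (m + 1) := by
  have hpos : 0 < (m : ℝ) + ν + 1 := by linarith [m.cast_nonneg (α := ℝ)]
  have hΓ : Gamma (((m + 1 : ℕ) : ℝ) + ν + 1) = (m + ν + 1) * Gamma (m + ν + 1) := by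
    rw [← Gamma_add_one hpos.ne']
    push_cast
    ring_nf
  have := (Gamma_pos_of_pos hpos).ne'
  rw [besselCoeff, besselCoeff, hΓ, Nat.factorial_succ]
  push_cast
  field_simp

theorem summable_besselCoeff_mul_pow (hν : -1 < ν) (r : ℝ) :
    Summable fun m => besselCoeff ν m * r ^ m := by
  refine summable_of_ratio_norm_eventually_le (r := 1 / 2) (by norm_num) ?_
  obtain ⟨N, hN⟩ := exists_nat_ge (2 * |r| - ν)
  filter_upwards [eventually_ge_atTop N] with m hm
  have hmN : (N : ℝ) ≤ m := by exact_mod_cast hm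
  have hc := besselCoeff_pos hν (m + 1)
  have hrec := besselCoeff_eq_mul_succ hν m
  rw [norm_mul, norm_mul, norm_pow, norm_pow, Real.norm_of_nonneg hc.le,
    Real.norm_of_nonneg (besselCoeff_pos hν m).le, hrec, Real.norm_eq_abs, pow_succ]
  have h1 : 2 * |r| ≤ (m + 1) * (m + ν + 1) := by nlinarith [abs_nonneg r]
  have : 0 ≤ besselCoeff ν (m + 1) * |r| ^ m := by positivity
  nlinarith [abs_nonneg r]

theorem tsum_besselCoeff_ode (hν : -1 < ν) (t : ℝ) :
    t * powerSeriesSum (derivCoeff (derivCoeff (besselCoeff ν))) t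
      + (ν + 1) * powerSeriesSum (derivCoeff (besselCoeff ν)) t
      = powerSeriesSum (besselCoeff ν) t := by
  have hc := summable_besselCoeff_mul_pow hν
  have hdc := summable_derivCoeff_mul_pow hc
  have hEuler : Summable fun m : ℕ => (m : ℝ) * derivCoeff (besselCoeff ν) m * t ^ m :=
    ((hc t).sub ((hdc t).mul_left (ν + 1))).congr fun m => by
      rw [besselCoeff_eq_mul_succ hν m, derivCoeff]; ring
  rw [← tsum_natCast_mul_mul_pow hdc, powerSeriesSum, powerSeriesSum, ← tsum_mul_left,
    ← hEuler.tsum_add ((hdc t).mul_left _)]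
  exact tsum_congr fun m => by rw [besselCoeff_eq_mul_succ hν m, derivCoeff]; ring

end BesselCoeff

section BesselI

variable {ν x : ℝ}

theorem besselI_eq_rpow_mul_powerSeriesSum (hx : 0 < x) :
    besselI ν x = (x / 2) ^ ν * powerSeriesSum (besselCoeff ν) (x ^ 2 / 4) := by
  rw [besselI, powerSeriesSum, ← tsum_mul_left]
  refine tsum_congr fun m => ?_
  have hpow : (x / 2) ^ (2 * (m : ℝ)) = (x ^ 2 / 4) ^ m := by
    rw [rpow_mul (by positivity), rpow_two, rpow_natCast]; ring
  rw [rpow_add (by positivity), hpow, besselCoeff, div_eq_mul_inv]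
  ring

theorem hasDerivAt_half_rpow (hx : 0 < x) :
    HasDerivAt (fun y => (y / 2) ^ ν) (ν / x * (x / 2) ^ ν) x := by
  refine (((hasDerivAt_id' x).div_const 2).rpow_const (p := ν) (Or.inl (by positivity))).congr_deriv
    ?_
  rw [rpow_sub_one (by positivity)]
  field_simp

theorem hasDerivAt_besselI (hν : -1 < ν) (hx : 0 < x) :
    HasDerivAt (besselI ν) ((x / 2) ^ ν * (ν / x * powerSeriesSum (besselCoeff ν) (x ^ 2 / 4)
      + x / 2 * powerSeriesSum (derivCoeff (besselCoeff ν)) (x ^ 2 / 4))) x := by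
  have hq : HasDerivAt (fun y : ℝ => y ^ 2 / 4) (x / 2) x :=
    ((hasDerivAt_pow 2 x).div_const 4).congr_deriv (by push_cast; ring)
  have hh := (hasDerivAt_powerSeriesSum (summable_besselCoeff_mul_pow hν) _).comp x hq
  refine (((hasDerivAt_half_rpow hx).mul hh).congr_of_eventuallyEq
    (eventually_gt_nhds hx |>.mono fun y hy => besselI_eq_rpow_mul_powerSeriesSum hy)).congr_deriv
    ?_
  simp only [Function.comp_apply]
  ring

theorem hasDerivAt_mul_deriv_besselI (hν : -1 < ν) (hx : 0 < x) :
    HasDerivAt (fun t => t * deriv (besselI ν) t) ((x ^ 2 + ν ^ 2) / x * besselI ν x) x := by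
  have hc := summable_besselCoeff_mul_pow hν
  have hq : HasDerivAt (fun y : ℝ => y ^ 2 / 4) (x / 2) x :=
    ((hasDerivAt_pow 2 x).div_const 4).congr_deriv (by push_cast; ring)
  have hsq : HasDerivAt (fun y : ℝ => y ^ 2 / 2) x x :=
    ((hasDerivAt_pow 2 x).div_const 2).congr_deriv (by push_cast; ring)
  have hh₀ := (hasDerivAt_powerSeriesSum hc _).comp x hq
  have hh₁ := (hasDerivAt_powerSeriesSum (summable_derivCoeff_mul_pow hc) _).comp x hq
  have hK := (hh₀.const_mul ν).add (hsq.mul hh₁)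
  have heq : (fun t => t * deriv (besselI ν) t) =ᶠ[𝓝 x]
      fun y => (y / 2) ^ ν * (ν * powerSeriesSum (besselCoeff ν) (y ^ 2 / 4)
        + y ^ 2 / 2 * powerSeriesSum (derivCoeff (besselCoeff ν)) (y ^ 2 / 4)) :=
    (eventually_gt_nhds hx).mono fun y hy => by
      dsimp only
      rw [(hasDerivAt_besselI hν hy).deriv]; field_simp
  refine (((hasDerivAt_half_rpow hx).mul hK).congr_of_eventuallyEq heq).congr_deriv ?_
  have hode := tsum_besselCoeff_ode hν (x ^ 2 / 4)
  rw [besselI_eq_rpow_mul_powerSeriesSum hx]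
  simp only [Function.comp_apply, Pi.add_apply, Pi.mul_apply]
  field_simp
  linear_combination (4 * x ^ 2) * hode

end BesselI

theorem sq_add_sq_mul_deriv_eq_of_eventually_mul_deriv_besselI_eq {ν : ℝ} (hν : -1 < ν)
    {s f : ℝ → ℝ} {l₀ s' f' : ℝ} (hs₀ : 0 < s l₀) (hs : HasDerivAt s s' l₀)
    (hf : HasDerivAt f f' l₀)
    (hmaster : ∀ᶠ l in 𝓝 l₀, s l * deriv (besselI ν) (s l) = (f l - ν) * besselI ν (s l))
    (hI : besselI ν (s l₀) ≠ 0) :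
    (s l₀ ^ 2 + ν ^ 2) * s' = s l₀ * f' + (f l₀ - ν) ^ 2 * s' := by
  have hL := (hasDerivAt_mul_deriv_besselI hν hs₀).comp l₀ hs
  have hR := (hf.sub_const ν).mul
    ((hasDerivAt_besselI hν hs₀).differentiableAt.hasDerivAt.comp l₀ hs)
  have heq := (hL.congr_of_eventuallyEq (hmaster.mono fun l hl => hl.symm)).unique hR
  have h₀ := hmaster.self_of_nhds
  apply mul_right_cancel₀ hI
  simp only [Function.comp_apply] at heq
  field_simp at heq
  linear_combination heq + s' * (f l₀ - ν) * h₀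

theorem stmt_3_general (k : ℝ) (hk : 0 < k) (x : ℝ → ℝ)
    (hxpos : ∀ lam : ℝ, 0 < lam → 0 < x lam)
    (hxdiff : ∀ lam : ℝ, 0 < lam → DifferentiableAt ℝ x lam)
    (hmaster : ∀ lam : ℝ, 0 < lam →
      Real.sqrt (lam * x lam) * deriv (besselI ((k - 2) / 2)) (Real.sqrt (lam * x lam)) =
        (x lam - (k - 2) / 2) * besselI ((k - 2) / 2) (Real.sqrt (lam * x lam)))
    (hIne : ∀ lam : ℝ, 0 < lam → besselI ((k - 2) / 2) (Real.sqrt (lam * x lam)) ≠ 0) :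
    ∀ lam : ℝ, 0 < lam →
      lam * deriv x lam * (x lam - k - lam + 4) + x lam * (x lam - k - lam + 2) = 0 := by
  intro lam hlam
  have hx := hxpos lam hlam
  have hu : 0 < lam * x lam := mul_pos hlam hx
  have hxd := (hxdiff lam hlam).hasDerivAt
  have hs : HasDerivAt (fun l => √(l * x l))
      ((x lam + lam * deriv x lam) / (2 * √(lam * x lam))) lam := by
    simpa using ((hasDerivAt_id' lam).mul hxd).sqrt hu.ne'
  have key := sq_add_sq_mul_deriv_eq_of_eventually_mul_deriv_besselI_eq (by linarith)
    (s := fun l => √(l * x l)) (sqrt_pos.2 hu) hs hxd ((eventually_gt_nhds hlam).mono hmaster)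
    (hIne lam hlam)
  have hsq : √(lam * x lam) ^ 2 = lam * x lam := sq_sqrt hu.le
  field_simp at key
  rw [hsq] at key
  apply mul_left_cancel₀ hx.ne'
  linear_combination (-1 / 4) * key

theorem stmt_3 (k : ℝ) (hk : 0 < k) (x : ℝ → ℝ)
    (hxpos : ∀ lam : ℝ, 0 < lam → 0 < x lam)
    (hxdiff : ∀ lam : ℝ, 0 < lam → DifferentiableAt ℝ x lam)
    (hmaster : ∀ lam : ℝ, 0 < lam →
      Real.sqrt (lam * x lam) * deriv (besselI ((k - 2) / 2)) (Real.sqrt (lam * x lam)) =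
        (x lam - (k - 2) / 2) * besselI ((k - 2) / 2) (Real.sqrt (lam * x lam)))
    (hIne : ∀ lam : ℝ, 0 < lam → besselI ((k - 2) / 2) (Real.sqrt (lam * x lam)) ≠ 0)
    (hne : ∀ lam : ℝ, 0 < lam → x lam + lam * deriv x lam ≠ 0) :
    ∀ lam : ℝ, 0 < lam →
      lam * deriv x lam * (x lam - k - lam + 4) + x lam * (x lam - k - lam + 2) = 0 :=
  stmt_3_general k hk x hxpos hxdiff hmaster hIne
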